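/- Assume |α_v| ≤ Q/2 for every vertex v (local minimality). Then t_1 − 3·t_3 ≥ (ε/2)·(q+1−√q)·r − √q·|α|. -/

import Mathlib

/-!
Write `x = |α_v|` and let `N_v` count ordered pairs of distinct edges of `α` at `v` spanning a
triangle. Double counting gives `t₁ + 2t₂ + 3t₃ = (q+1)|α|`, `∑_v N_v = 2t₂ + 6t₃` and
`∑_v x = 2|α|`, hence `t₁ - 3t₃ = ∑_v ((q+1)x/2 - N_v)`. Now `N_v` is the quadratic form of the
adjacency matrix of the link `Y_v` at the indicator of `α_v`. Since `Y_v` is connected and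
`(q+1)`-regular, the eigenvalue `q+1` has only constant eigenvectors and every other eigenvalue is
at most `√q`, so the expander mixing bound gives `N_v ≤ (q+1)x²/Q + √q(x - x²/Q)`. Hence vertex
`v` contributes at least `(q+1-√q)·x(Q-2x)/(2Q) - √q·x/2`: local minimality makes the first term
nonnegative, and for a thin vertex `Q - 2x > εQ`.
-/

open scoped Classical
open Matrix

structure SComplex (V : Type) [DecidableEq V] where
  faces : Finset (Finset V)
  down_closed : ∀ σ ∈ faces, ∀ τ ⊆ σ, τ ∈ faces

namespace SComplex

variable {V : Type} [Fintype V] [DecidableEq V]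

/-- The faces of cardinality `n` (i.e. of dimension `n-1`); so `K Y 2` is the edge set
and `K Y 3` the set of triangles. -/
def K (X : SComplex V) (n : ℕ) : Finset (Finset V) := X.faces.filter fun σ => σ.card = n

/-- `X` is pure with all facets (maximal faces) of cardinality `D` (dimension `D-1`). -/
def IsPure (X : SComplex V) (D : ℕ) : Prop :=
  X.faces.Nonempty ∧ ∀ σ ∈ X.faces, ∃ τ ∈ X.faces, σ ⊆ τ ∧ τ.card = D

end SComplex

variable {V : Type} [Fintype V] [DecidableEq V]

/-- `t_i`: the number of triangles of `Y` containing exactly `i` edges of `α`. -/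
def tcount (Y : SComplex V) (α : Finset (Finset V)) (i : ℕ) : ℕ :=
  ((Y.K 3).filter fun τ => (α.filter fun e => e ⊆ τ).card = i).card

/-- `α_v`: the set of edges of `α` containing the vertex `v`. -/
def alphaV (α : Finset (Finset V)) (v : V) : Finset (Finset V) :=
  α.filter fun e => v ∈ e

/-- The 1-skeleton of `Y`, as a simple graph on the vertex type. -/
def skeletonGraph (Y : SComplex V) : SimpleGraph V where
  Adj u w := u ≠ w ∧ ({u, w} : Finset V) ∈ Y.faces
  symm := by
    constructor
    intro u w h
    exact ⟨h.1.symm, by rw [Finset.pair_comm]; exact h.2⟩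
  loopless := by constructor; intro u h; exact h.1 rfl

/-- The vertices of the link of `v`: the edges of `Y` containing `v`. -/
def linkVerts (Y : SComplex V) (v : V) : Finset (Finset V) :=
  (Y.K 2).filter fun e => v ∈ e

/-- The link graph `Y_v`: vertices are the edges of `Y` containing `v`, two edges being
adjacent iff they lie in a common triangle of `Y`. -/
def linkGraph (Y : SComplex V) (v : V) : SimpleGraph ↥(linkVerts Y v) where
  Adj e f := e ≠ f ∧ (e.1 ∪ f.1) ∈ Y.K 3
  symm := by
    constructor
    intro e f h
    exact ⟨h.1.symm, by rw [Finset.union_comm]; exact h.2⟩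
  loopless := by constructor; intro e h; exact h.1 rfl

/-- The standing hypotheses on the 2-dimensional complex `Y` (with `Q = 2(q²+q+1)`):
`q ≥ 2`; `Y` is finite pure 2-dimensional; (i) every edge lies in exactly `q+1` triangles;
(ii) the 1-skeleton is a connected `Q`-regular graph whose adjacency eigenvalues other than
`Q` have absolute value at most `6q`; (iii) every link `Y_v` is a connected bipartite
`(q+1)`-regular graph on `Q` vertices whose adjacency eigenvalues other than `±(q+1)` have
absolute value at most `√q`. -/
def Setup (q : ℕ) (Y : SComplex V) : Prop :=
  2 ≤ q ∧ Y.IsPure 3 ∧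
  (∀ e ∈ Y.K 2, ((Y.K 3).filter fun τ => e ⊆ τ).card = q + 1) ∧
  (skeletonGraph Y).Connected ∧
  (∀ v : V, (skeletonGraph Y).degree v = 2 * (q ^ 2 + q + 1)) ∧
  (∀ mu : ℝ, (∃ f : V → ℝ, f ≠ 0 ∧ (skeletonGraph Y).adjMatrix ℝ *ᵥ f = mu • f) →
    mu = 2 * ((q : ℝ) ^ 2 + q + 1) ∨ |mu| ≤ 6 * (q : ℝ)) ∧
  (∀ v : V,
    (linkGraph Y v).Connected ∧
    (∃ C : ↥(linkVerts Y v) → Bool, ∀ a b, (linkGraph Y v).Adj a b → C a ≠ C b) ∧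
    (∀ a : ↥(linkVerts Y v), (linkGraph Y v).degree a = q + 1) ∧
    (linkVerts Y v).card = 2 * (q ^ 2 + q + 1) ∧
    (∀ mu : ℝ, (∃ f : ↥(linkVerts Y v) → ℝ, f ≠ 0 ∧
        (linkGraph Y v).adjMatrix ℝ *ᵥ f = mu • f) →
      mu = (q : ℝ) + 1 ∨ mu = -((q : ℝ) + 1) ∨ |mu| ≤ Real.sqrt q))


theorem Matrix.IsHermitian.dotProduct_mulVec_le {n : Type*} [Fintype n] [DecidableEq n]
    {A : Matrix n n ℝ} (hA : A.IsHermitian) {b : ℝ} {x : n → ℝ}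
    (hx : ∀ i, b < hA.eigenvalues i → x ⬝ᵥ ⇑(hA.eigenvectorBasis i) = 0) :
    x ⬝ᵥ (A *ᵥ x) ≤ b * (x ⬝ᵥ x) := by
  set e := hA.eigenvectorBasis
  set c : n → ℝ := fun i => x ⬝ᵥ ⇑(e i)
  have hexpand : ∀ y : n → ℝ, x ⬝ᵥ y = ∑ i, c i * (y ⬝ᵥ ⇑(e i)) := fun y => by
    simpa [EuclideanSpace.inner_eq_star_dotProduct, c, dotProduct_comm, mul_comm] using
      (e.sum_inner_mul_inner (WithLp.toLp 2 y) (WithLp.toLp 2 x)).symm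
  have hAe : ∀ i, (A *ᵥ x) ⬝ᵥ ⇑(e i) = hA.eigenvalues i * c i := fun i => by
    have hsymm : Aᵀ = A := by simpa [conjTranspose_eq_transpose_of_trivial] using hA.eq
    rw [dotProduct_comm, dotProduct_mulVec, ← mulVec_transpose, hsymm,
      hA.mulVec_eigenvectorBasis, smul_dotProduct, dotProduct_comm]
    rfl
  calc x ⬝ᵥ (A *ᵥ x) = ∑ i, hA.eigenvalues i * c i ^ 2 := by
        simp only [hexpand (A *ᵥ x), hAe]; congr 1; ext i; ring
    _ ≤ ∑ i, b * c i ^ 2 := by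
        refine Finset.sum_le_sum fun i _ => ?_
        rcases le_or_gt (hA.eigenvalues i) b with h | h
        · exact mul_le_mul_of_nonneg_right h (sq_nonneg _)
        · simp [c, hx i h]
    _ = b * (x ⬝ᵥ x) := by rw [hexpand x, Finset.mul_sum]; simp only [c, sq]

namespace SimpleGraph

variable {W : Type*} [Fintype W] {G : SimpleGraph W} [DecidableRel G.Adj] {k : ℕ} {b : ℝ}

theorem eq_of_adjMatrix_mulVec_eq_smul [DecidableEq W] (hconn : G.Connected)
    (hreg : G.IsRegularOfDegree k) {f : W → ℝ} (hf : G.adjMatrix ℝ *ᵥ f = (k : ℝ) • f)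
    (u w : W) : f u = f w := by
  have hlap : G.lapMatrix ℝ *ᵥ f = 0 := by
    ext v
    rw [lapMatrix, sub_mulVec, Pi.sub_apply, degMatrix_mulVec_apply, hf, hreg v]
    simp
  exact (lapMatrix_mulVec_eq_zero_iff_forall_reachable G).1 hlap u w (hconn u w)

theorem adjMatrix_mulVec_one_of_regular (hreg : G.IsRegularOfDegree k) :
    G.adjMatrix ℝ *ᵥ 1 = (k : ℝ) • 1 := by
  ext v
  simpa using adjMatrix_mulVec_const_apply_of_regular (α := ℝ) (a := 1) hreg (v := v)

theorem one_dotProduct_adjMatrix_mulVec_of_regular (hreg : G.IsRegularOfDegree k) (f : W → ℝ) :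
    1 ⬝ᵥ (G.adjMatrix ℝ *ᵥ f) = k * ∑ u, f u := by
  rw [dotProduct_mulVec, ← mulVec_transpose, G.isSymm_adjMatrix.eq,
    adjMatrix_mulVec_one_of_regular hreg, smul_dotProduct, dotProduct_comm, dotProduct_one,
    smul_eq_mul]

theorem dotProduct_adjMatrix_mulVec_le_of_sum_eq_zero [DecidableEq W] (hconn : G.Connected)
    (hreg : G.IsRegularOfDegree k)
    (heig : ∀ μ : ℝ, (∃ f : W → ℝ, f ≠ 0 ∧ G.adjMatrix ℝ *ᵥ f = μ • f) → μ = k ∨ μ ≤ b)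
    {g : W → ℝ} (hg : ∑ u, g u = 0) : g ⬝ᵥ (G.adjMatrix ℝ *ᵥ g) ≤ b * (g ⬝ᵥ g) := by
  have hA := G.isHermitian_adjMatrix ℝ
  refine hA.dotProduct_mulVec_le fun i hi => ?_
  set e := ⇑(hA.eigenvectorBasis i)
  have he : G.adjMatrix ℝ *ᵥ e = hA.eigenvalues i • e := hA.mulVec_eigenvectorBasis i
  have he0 : e ≠ 0 := fun h =>
    hA.eigenvectorBasis.orthonormal.ne_zero i (by ext u; exact congrFun h u)
  obtain hk | hle := heig _ ⟨e, he0, he⟩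
  · obtain ⟨u₀⟩ := hconn.nonempty
    have hconst : e = fun _ => e u₀ := funext fun u =>
      eq_of_adjMatrix_mulVec_eq_smul hconn hreg (hk ▸ he) u u₀
    rw [hconst]
    simp [dotProduct, ← Finset.sum_mul, hg]
  · exact absurd hle (not_le.2 hi)

theorem dotProduct_adjMatrix_mulVec_le [DecidableEq W] (hconn : G.Connected)
    (hreg : G.IsRegularOfDegree k)
    (heig : ∀ μ : ℝ, (∃ f : W → ℝ, f ≠ 0 ∧ G.adjMatrix ℝ *ᵥ f = μ • f) → μ = k ∨ μ ≤ b)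
    (f : W → ℝ) :
    f ⬝ᵥ (G.adjMatrix ℝ *ᵥ f) ≤ k * (∑ u, f u) ^ 2 / Fintype.card W
      + b * (f ⬝ᵥ f - (∑ u, f u) ^ 2 / Fintype.card W) := by
  have hN : (0 : ℝ) < Fintype.card W := by
    have := hconn.nonempty
    exact_mod_cast Fintype.card_pos
  set c := (∑ u, f u) / Fintype.card W
  have hg : ∑ u, (f - c • 1) u = 0 := by
    simp [Finset.sum_sub_distrib, c]
    field_simp
    ring
  have key := dotProduct_adjMatrix_mulVec_le_of_sum_eq_zero hconn hreg heig hg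
  have hf1 : f ⬝ᵥ (G.adjMatrix ℝ *ᵥ 1) = k * ∑ u, f u := by
    rw [adjMatrix_mulVec_one_of_regular hreg, dotProduct_smul, dotProduct_one, smul_eq_mul,
      mul_comm]
  simp only [mulVec_sub, mulVec_smul, sub_dotProduct, dotProduct_sub, smul_dotProduct,
    dotProduct_smul, one_dotProduct_adjMatrix_mulVec_of_regular hreg, hf1, one_dotProduct,
    dotProduct_one, smul_eq_mul, hg, Pi.one_apply, Finset.sum_const, Finset.card_univ,
    nsmul_eq_mul, mul_one] at key
  have hc : c * ∑ u, f u = (∑ u, f u) ^ 2 / Fintype.card W := by ring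
  have hc' : c * (c * Fintype.card W) = (∑ u, f u) ^ 2 / Fintype.card W := by
    simp only [c]; field_simp
  linear_combination key + (k - b) * hc - k * hc'

end SimpleGraph

open Finset

theorem Finset.card_lt_card_union_of_ne {ι : Type*} [DecidableEq ι] {s t : Finset ι}
    (hcard : #s = #t) (hne : s ≠ t) : #s < #(s ∪ t) := by
  by_contra! h
  have hs : s = s ∪ t := eq_of_subset_of_card_le subset_union_left h
  have ht : t = s ∪ t := eq_of_subset_of_card_le subset_union_right (by omega)
  exact hne (hs.trans ht.symm)

namespace SComplex

variable {V : Type} [DecidableEq V] {X : SComplex V}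

theorem card_of_mem_K {n : ℕ} {σ : Finset V} (hσ : σ ∈ X.K n) : #σ = n :=
  (mem_filter.1 hσ).2

theorem union_eq_of_subset_of_mem_K {e f τ : Finset V} (he : e ∈ X.K 2) (hf : f ∈ X.K 2)
    (hef : e ≠ f) (hτ : τ ∈ X.K 3) (heτ : e ⊆ τ) (hfτ : f ⊆ τ) : e ∪ f = τ := by
  have := card_lt_card_union_of_ne ((card_of_mem_K he).trans (card_of_mem_K hf).symm) hef
  rw [card_of_mem_K he] at this
  exact eq_of_subset_of_card_le (union_subset heτ hfτ) (by rw [card_of_mem_K hτ]; omega)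

theorem card_inter_eq_one_of_union_mem_K {e f : Finset V} (he : e ∈ X.K 2) (hf : f ∈ X.K 2)
    (hef : e ∪ f ∈ X.K 3) : #(e ∩ f) = 1 := by
  have := card_union_add_card_inter e f
  rw [card_of_mem_K he, card_of_mem_K hf, card_of_mem_K hef] at this
  omega

end SComplex

open SComplex

section Counting

variable {V : Type} [DecidableEq V] {Y : SComplex V} {α : Finset (Finset V)}

theorem card_filter_subset_le_three (hα : α ⊆ Y.K 2) {τ : Finset V} (hτ : τ ∈ Y.K 3) :
    #(α.filter (· ⊆ τ)) ≤ 3 := by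
  calc #(α.filter (· ⊆ τ)) ≤ #(τ.powersetCard 2) := card_le_card fun e he => by
        rw [mem_filter] at he
        exact mem_powersetCard.2 ⟨he.2, card_of_mem_K (hα he.1)⟩
    _ = 3 := by rw [card_powersetCard, card_of_mem_K hτ]; rfl

theorem sum_card_filter_subset (q : ℕ) (hα : α ⊆ Y.K 2)
    (htri : ∀ e ∈ Y.K 2, #((Y.K 3).filter (e ⊆ ·)) = q + 1) :
    ∑ τ ∈ Y.K 3, #(α.filter (· ⊆ τ)) = (q + 1) * #α := by
  refine (sum_card_bipartiteAbove_eq_sum_card_bipartiteBelow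
    (r := fun τ e : Finset V => e ⊆ τ)).trans ?_
  simp only [bipartiteBelow]
  rw [sum_congr rfl fun e he => htri e (hα he), sum_const, smul_eq_mul, mul_comm]

theorem sum_comp_card_filter_subset (hα : α ⊆ Y.K 2) (F : ℕ → ℕ) (hF : F 0 = 0) :
    ∑ τ ∈ Y.K 3, F #(α.filter (· ⊆ τ)) =
      F 1 * tcount Y α 1 + F 2 * tcount Y α 2 + F 3 * tcount Y α 3 := by
  have hmaps : ∀ τ ∈ Y.K 3, #(α.filter (· ⊆ τ)) ∈ range 4 := fun τ hτ =>
    mem_range.2 (Nat.lt_succ_of_le (card_filter_subset_le_three hα hτ))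
  rw [← sum_fiberwise_of_maps_to hmaps]
  have hfiber : ∀ j ∈ range 4, ∑ τ ∈ (Y.K 3).filter (fun τ => #(α.filter (· ⊆ τ)) = j),
      F #(α.filter (· ⊆ τ)) = F j * tcount Y α j := fun j _ => by
    rw [sum_congr rfl fun τ hτ => by rw [(mem_filter.1 hτ).2], sum_const, smul_eq_mul, mul_comm]
    rfl
  simp [sum_congr rfl hfiber, sum_range_succ, hF]

theorem sum_card_alphaV [Fintype V] (hα : α ⊆ Y.K 2) : ∑ v, #(alphaV α v) = 2 * #α := by
  refine (sum_card_bipartiteAbove_eq_sum_card_bipartiteBelow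
    (r := fun (v : V) e => v ∈ e)).trans ?_
  have hedge : ∀ e ∈ α, #(univ.bipartiteBelow (fun v e => v ∈ e) e) = 2 := fun e he => by
    rw [bipartiteBelow, filter_mem_eq_inter, univ_inter, card_of_mem_K (hα he)]
  rw [sum_congr rfl hedge, sum_const, smul_eq_mul, mul_comm]

def trianglePairs (Y : SComplex V) (α : Finset (Finset V)) : Finset (Finset V × Finset V) :=
  α.offDiag.filter fun p => p.1 ∪ p.2 ∈ Y.K 3

/-- Twice the number of edges of the link `Y_v` with both ends in `α_v`. -/
def linkPairCount (Y : SComplex V) (α : Finset (Finset V)) (v : V) : ℕ :=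
  #((trianglePairs Y α).filter fun p => v ∈ p.1 ∩ p.2)

theorem sum_linkPairCount_eq_card_trianglePairs [Fintype V] (hα : α ⊆ Y.K 2) :
    ∑ v, linkPairCount Y α v = #(trianglePairs Y α) := by
  refine (sum_card_bipartiteAbove_eq_sum_card_bipartiteBelow
    (r := fun (v : V) (p : Finset V × Finset V) => v ∈ p.1 ∩ p.2)).trans ?_
  rw [card_eq_sum_ones]
  refine sum_congr rfl fun p hp => ?_
  simp only [trianglePairs, mem_filter, mem_offDiag] at hp
  rw [bipartiteBelow, filter_mem_eq_inter, univ_inter,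
    card_inter_eq_one_of_union_mem_K (hα hp.1.1) (hα hp.1.2.1) hp.2]

theorem sum_card_offDiag_filter_subset (hα : α ⊆ Y.K 2) :
    ∑ τ ∈ Y.K 3, #((α.filter (· ⊆ τ)).offDiag) = #(trianglePairs Y α) := by
  have hoff : ∀ τ, (α.filter (· ⊆ τ)).offDiag = α.offDiag.filter fun p => p.1 ∪ p.2 ⊆ τ :=
    fun τ => by ext p; simp only [mem_filter, mem_offDiag, union_subset_iff]; tauto
  simp only [hoff]
  refine (sum_card_bipartiteAbove_eq_sum_card_bipartiteBelow
    (r := fun (τ : Finset V) (p : Finset V × Finset V) => p.1 ∪ p.2 ⊆ τ)).trans ?_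
  rw [trianglePairs, card_filter]
  refine sum_congr rfl fun p hp => ?_
  rw [mem_offDiag] at hp
  have hunique : (Y.K 3).bipartiteBelow (fun τ p => p.1 ∪ p.2 ⊆ τ) p =
      (Y.K 3).filter (fun τ => τ = p.1 ∪ p.2) := by
    ext τ
    simp only [bipartiteBelow, mem_filter, and_congr_right_iff]
    exact fun hτ => ⟨fun h => (union_eq_of_subset_of_mem_K (hα hp.1) (hα hp.2.1) hp.2.2 hτ
      (union_subset_iff.1 h).1 (union_subset_iff.1 h).2).symm, fun h => h ▸ subset_rfl⟩
  rw [hunique, filter_eq']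
  split_ifs <;> simp

theorem sum_linkPairCount [Fintype V] (hα : α ⊆ Y.K 2) :
    ∑ v, linkPairCount Y α v = 2 * tcount Y α 2 + 6 * tcount Y α 3 := by
  rw [sum_linkPairCount_eq_card_trianglePairs hα, ← sum_card_offDiag_filter_subset hα]
  simp only [offDiag_card]
  rw [sum_comp_card_filter_subset hα (fun n => n * n - n) rfl]
  norm_num

theorem t1_sub_three_t3_eq_sum [Fintype V] (q : ℕ) (hα : α ⊆ Y.K 2)
    (htri : ∀ e ∈ Y.K 2, #((Y.K 3).filter (e ⊆ ·)) = q + 1) :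
    (tcount Y α 1 : ℝ) - 3 * tcount Y α 3 =
      ∑ v, (((q : ℝ) + 1) / 2 * #(alphaV α v) - linkPairCount Y α v) := by
  have hedges : ((q : ℝ) + 1) * #α = tcount Y α 1 + 2 * tcount Y α 2 + 3 * tcount Y α 3 := by
    have := (sum_card_filter_subset q hα htri).symm.trans (sum_comp_card_filter_subset hα id rfl)
    exact_mod_cast (by simpa using this)
  have hvert : (∑ v, #(alphaV α v) : ℝ) = 2 * #α := by exact_mod_cast sum_card_alphaV hα
  have hpairs : (∑ v, linkPairCount Y α v : ℝ) = 2 * tcount Y α 2 + 6 * tcount Y α 3 := by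
    exact_mod_cast sum_linkPairCount hα
  rw [sum_sub_distrib, ← mul_sum, hvert, hpairs]
  linarith

end Counting

section Link

variable {V : Type} [DecidableEq V] {Y : SComplex V} {α : Finset (Finset V)}

def linkIndicator (Y : SComplex V) (α : Finset (Finset V)) (v : V) : linkVerts Y v → ℝ :=
  fun a => if a.1 ∈ α then 1 else 0

theorem linkVerts_filter_mem (hα : α ⊆ Y.K 2) (v : V) :
    (linkVerts Y v).filter (· ∈ α) = alphaV α v := by
  ext e
  simp only [linkVerts, alphaV, mem_filter]
  exact ⟨fun h => ⟨h.2, h.1.2⟩, fun h => ⟨⟨hα h.1, h.2⟩, h.1⟩⟩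

theorem sum_linkIndicator (hα : α ⊆ Y.K 2) (v : V) :
    ∑ a, linkIndicator Y α v a = #(alphaV α v) := by
  simp only [linkIndicator]
  rw [sum_coe_sort (linkVerts Y v) (fun e => if e ∈ α then (1 : ℝ) else 0),
    sum_boole, linkVerts_filter_mem hα]

theorem linkIndicator_dotProduct_self (hα : α ⊆ Y.K 2) (v : V) :
    linkIndicator Y α v ⬝ᵥ linkIndicator Y α v = #(alphaV α v) := by
  rw [← sum_linkIndicator hα, dotProduct]
  exact sum_congr rfl fun a _ => by unfold linkIndicator; split_ifs <;> norm_num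

theorem linkPairCount_eq_dotProduct (hα : α ⊆ Y.K 2) (v : V) :
    (linkPairCount Y α v : ℝ) =
      linkIndicator Y α v ⬝ᵥ ((linkGraph Y v).adjMatrix ℝ *ᵥ linkIndicator Y α v) := by
  set T := (trianglePairs Y α).filter fun p => v ∈ p.1 ∩ p.2
  have hT : T ⊆ linkVerts Y v ×ˢ linkVerts Y v := fun p hp => by
    simp only [T, trianglePairs, mem_filter, mem_offDiag, mem_inter] at hp
    exact mem_product.2 ⟨mem_filter.2 ⟨hα hp.1.1.1, hp.2.1⟩, mem_filter.2 ⟨hα hp.1.1.2.1, hp.2.2⟩⟩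
  have hterm : ∀ a b : linkVerts Y v,
      (if (linkGraph Y v).Adj a b then linkIndicator Y α v a * linkIndicator Y α v b else 0) =
        if (a.1, b.1) ∈ T then 1 else 0 := fun a b => by
    simp only [linkGraph, linkIndicator, T, trianglePairs, mem_filter, mem_offDiag, mem_inter,
      ne_eq, Subtype.ext_iff]
    have ha := (mem_filter.1 a.2).2
    have hb := (mem_filter.1 b.2).2
    split_ifs <;> simp_all
  have hcoe : ∀ e, ∑ b : linkVerts Y v, (if (e, b.1) ∈ T then (1 : ℝ) else 0) =
      ∑ f ∈ linkVerts Y v, if (e, f) ∈ T then 1 else 0 := fun e =>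
    sum_coe_sort (linkVerts Y v) fun f => if (e, f) ∈ T then (1 : ℝ) else 0
  rw [SimpleGraph.dotProduct_mulVec_adjMatrix]
  simp only [hterm, hcoe]
  rw [sum_coe_sort (linkVerts Y v) fun e => ∑ f ∈ linkVerts Y v, if (e, f) ∈ T then (1 : ℝ) else 0,
    ← sum_product', sum_boole, filter_mem_eq_inter, inter_eq_right.2 hT, linkPairCount]

theorem Real.sqrt_natCast_le_add_one (q : ℕ) : √(q : ℝ) ≤ q + 1 :=
  Real.sqrt_le_iff.2 ⟨by positivity, by nlinarith⟩

theorem linkPairCount_le [Fintype V] {q : ℕ} (hY : Setup q Y) (hα : α ⊆ Y.K 2) (v : V) :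
    (linkPairCount Y α v : ℝ) ≤ ((q : ℝ) + 1) * #(alphaV α v) ^ 2 / (2 * ((q : ℝ) ^ 2 + q + 1))
      + √q * (#(alphaV α v) - #(alphaV α v) ^ 2 / (2 * ((q : ℝ) ^ 2 + q + 1))) := by
  obtain ⟨-, -, -, -, -, -, hlink⟩ := hY
  obtain ⟨hconn, -, hreg, hcard, heig⟩ := hlink v
  have heig' : ∀ μ : ℝ, (∃ f : linkVerts Y v → ℝ, f ≠ 0 ∧
      (linkGraph Y v).adjMatrix ℝ *ᵥ f = μ • f) → μ = ((q + 1 : ℕ) : ℝ) ∨ μ ≤ √q := by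
    intro μ hμ
    rcases heig μ hμ with h | h | h
    · left; rw [h]; push_cast; ring
    · right; rw [h]; linarith [Real.sqrt_natCast_le_add_one q, Real.sqrt_nonneg (q : ℝ)]
    · exact Or.inr (abs_le.1 h).2
  have := SimpleGraph.dotProduct_adjMatrix_mulVec_le hconn hreg heig' (linkIndicator Y α v)
  rw [← linkPairCount_eq_dotProduct hα, sum_linkIndicator hα, linkIndicator_dotProduct_self hα,
    Fintype.card_coe, hcard] at this
  push_cast at this
  exact this

end Link

theorem le_half_mul_sub_of_le_mixing_bound {k s Q x N δ : ℝ} (hQ : 0 < Q) (hsk : s ≤ k)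
    (hx : 0 ≤ x) (hxδ : x ≤ (1 - δ) * Q / 2) (hN : N ≤ k * x ^ 2 / Q + s * (x - x ^ 2 / Q)) :
    δ / 2 * (k - s) * x - s / 2 * x ≤ k / 2 * x - N := by
  have hslack : 0 ≤ (k - s) * x * ((1 - δ) * Q - 2 * x) / (2 * Q) := by
    apply div_nonneg _ (by positivity)
    exact mul_nonneg (mul_nonneg (by linarith) hx) (by linarith)
  have hid : k / 2 * x - (k * x ^ 2 / Q + s * (x - x ^ 2 / Q)) - (δ / 2 * (k - s) * x - s / 2 * x)
      = (k - s) * x * ((1 - δ) * Q - 2 * x) / (2 * Q) := by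
    field_simp
    ring
  linarith

theorem t1_sub_three_t3_lower_bound_general
    {V : Type} [Fintype V] [DecidableEq V] (q : ℕ) (Y : SComplex V) (hY : Setup q Y)
    (ε : ℝ)
    (α : Finset (Finset V)) (hα : α ⊆ Y.K 2)
    (hlocmin : ∀ v : V, ((alphaV α v).card : ℝ) ≤ 2 * ((q : ℝ) ^ 2 + q + 1) / 2) :
    (tcount Y α 1 : ℝ) - 3 * (tcount Y α 3 : ℝ) ≥
      (ε / 2) * ((q : ℝ) + 1 - Real.sqrt q) *
          (∑ v ∈ Finset.univ.filter (fun v : V => (alphaV α v).Nonempty ∧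
              ((alphaV α v).card : ℝ) < (1 - ε) * (2 * ((q : ℝ) ^ 2 + q + 1)) / 2),
            ((alphaV α v).card : ℝ))
        - Real.sqrt q * (α.card : ℝ) := by
  have hcard : (#α : ℝ) = ∑ v, (#(alphaV α v) : ℝ) / 2 := by
    rw [← sum_div, ← Nat.cast_sum, sum_card_alphaV hα]
    push_cast
    ring
  rw [ge_iff_le, t1_sub_three_t3_eq_sum q hα hY.2.2.1, sum_filter, hcard, mul_sum, mul_sum,
    ← sum_sub_distrib]
  refine sum_le_sum fun v _ => ?_
  have hQ : (0 : ℝ) < 2 * ((q : ℝ) ^ 2 + q + 1) := by positivity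
  have hsq := Real.sqrt_natCast_le_add_one q
  have hN := linkPairCount_le hY hα v
  split_ifs with hthin
  · have := le_half_mul_sub_of_le_mixing_bound hQ hsq (Nat.cast_nonneg _) hthin.2.le hN
    linarith
  · have := le_half_mul_sub_of_le_mixing_bound (δ := 0) hQ hsq (Nat.cast_nonneg _)
      (by linarith [hlocmin v]) hN
    linarith

/-- Under the standing hypotheses, if `|α_v| ≤ Q/2` for every vertex `v`
(local minimality), then `t₁ − 3t₃ ≥ (ε/2)(q+1−√q)·r − √q·|α|`, where `r` is the total
contribution of the thin vertices. -/
theorem t1_sub_three_t3_lower_bound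
    {V : Type} [Fintype V] [DecidableEq V] (q : ℕ) (Y : SComplex V) (hY : Setup q Y)
    (ε : ℝ) (hε0 : 0 < ε) (hε1 : ε < 1)
    (α : Finset (Finset V)) (hα : α ⊆ Y.K 2)
    (hlocmin : ∀ v : V, ((alphaV α v).card : ℝ) ≤ 2 * ((q : ℝ) ^ 2 + q + 1) / 2) :
    (tcount Y α 1 : ℝ) - 3 * (tcount Y α 3 : ℝ) ≥
      (ε / 2) * ((q : ℝ) + 1 - Real.sqrt q) *
          (∑ v ∈ Finset.univ.filter (fun v : V => (alphaV α v).Nonempty ∧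
              ((alphaV α v).card : ℝ) < (1 - ε) * (2 * ((q : ℝ) ^ 2 + q + 1)) / 2),
            ((alphaV α v).card : ℝ))
        - Real.sqrt q * (α.card : ℝ) :=
  t1_sub_three_t3_lower_bound_general q Y hY ε α hα hlocmin
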